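/- Let S = {(0,0), (0,1), (0,2), (1,0), (1,1), (1,2)} ⊆ ℝ². Then ⋃_{i ≥ 0} Tⁱ(S) equals the set ℚ² of all points of ℝ² with both coordinates rational. -/

import Mathlib

open Set Filter

noncomputable section

/-- The line through two points in the plane `ℝ × ℝ`. -/
def line (a b : ℝ × ℝ) : AffineSubspace ℝ (ℝ × ℝ) := affineSpan ℝ {a, b}

/-- The intersection operation `T`: the set of all intersection points of pairs of
distinct lines through pairs of distinct points of `S`. -/
def interT (S : Set (ℝ × ℝ)) : Set (ℝ × ℝ) :=
  {x | ∃ a ∈ S, ∃ b ∈ S, ∃ c ∈ S, ∃ d ∈ S,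
    a ≠ b ∧ c ≠ d ∧ line a b ≠ line c d ∧ x ∈ line a b ∧ x ∈ line c d}

/-- The set of points of `ℝ × ℝ` with both coordinates rational. -/
def ratPoints : Set (ℝ × ℝ) := {p | ∃ a b : ℚ, p = ((a : ℝ), (b : ℝ))}

/-!
Distinct parallel lines do not meet, and two non-parallel lines through rational points meet at
the point given by Cramer's rule with rational data, so `T` preserves `ℚ²`.

Conversely, every one of the six points is the meet of a horizontal and a vertical line through
two others, so the iterates increase and their union `U` is closed under `T`. Reflecting the
column `{u} × {0, 1, 2}` in the column at `v` gives the column at `2v - u`, which yields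
`ℤ × {0, 1, 2} ⊆ U`. The vertical line `x = x₀` meets the diagonal through `(x₀ - y₀, 0)` and
`(x₀ - y₀ + 1, 1)` at `(x₀, y₀)`, giving `ℤ² ⊆ U`; the row `y = k` meets the line through
`(0, k + 1)` and `(n, k + 1 - d)` at `(n / d, k)`, giving `ℚ × ℤ ⊆ U`; and the diagonal trick
once more gives `ℚ² ⊆ U`.
-/

lemma Int.forall_of_two_mul_sub {P : ℤ → Prop} (h₀ : P 0) (h₁ : P 1)
    (hstep : ∀ m n : ℤ, m ≠ n → P m → P n → P (2 * n - m)) (m : ℤ) : P m := by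
  suffices ∀ m : ℤ, P m ∧ P (m + 1) from (this m).1
  intro m
  induction m using Int.induction_on with
  | zero => exact ⟨h₀, h₁⟩
  | succ n ih =>
    refine ⟨ih.2, ?_⟩
    convert hstep n (n + 1) (by omega) ih.1 ih.2 using 1
    ring
  | pred n ih =>
    refine ⟨?_, by simpa using ih.1⟩
    convert hstep (-n + 1) (-n) (by omega) ih.2 ih.1 using 1
    ring

namespace LineIntersection

def cross (v w : ℝ × ℝ) : ℝ := v.1 * w.2 - v.2 * w.1

lemma cross_self (v : ℝ × ℝ) : cross v v = 0 := by
  simp only [cross]; ring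

lemma cross_smul_right (r : ℝ) (v w : ℝ × ℝ) : cross v (r • w) = r * cross v w := by
  simp only [cross, Prod.smul_fst, Prod.smul_snd, smul_eq_mul]; ring

lemma cross_sub_right (v w z : ℝ × ℝ) : cross v (w - z) = cross v w - cross v z := by
  simp only [cross, Prod.fst_sub, Prod.snd_sub]; ring

lemma cross_comm (v w : ℝ × ℝ) : cross v w = -cross w v := by
  simp only [cross]; ring

lemma cross_smul_eq (v w z : ℝ × ℝ) : cross v w • z = cross z w • v + cross v z • w := by
  ext <;> simp only [cross, Prod.smul_fst, Prod.smul_snd, Prod.fst_add, Prod.snd_add,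
    smul_eq_mul] <;> ring

lemma eq_smul_of_cross_eq_zero {v w z : ℝ × ℝ} (hvw : cross v w ≠ 0) (hvz : cross v z = 0) :
    z = (cross z w / cross v w) • v := by
  have h := cross_smul_eq v w z
  rw [hvz, zero_smul, add_zero] at h
  rw [div_eq_inv_mul, mul_smul, ← h, inv_smul_smul₀ hvw]

lemma cross_rotate_ne_zero {v : ℝ × ℝ} (hv : v ≠ 0) : cross v (-v.2, v.1) ≠ 0 := by
  contrapose! hv
  simp only [cross] at hv
  ext <;> simp only [Prod.fst_zero, Prod.snd_zero] <;> nlinarith [sq_nonneg v.1, sq_nonneg v.2]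

lemma exists_smul_eq_iff_cross_eq_zero {v z : ℝ × ℝ} (hv : v ≠ 0) :
    (∃ r : ℝ, r • v = z) ↔ cross v z = 0 := by
  refine ⟨?_, fun h => ⟨_, (eq_smul_of_cross_eq_zero (cross_rotate_ne_zero hv) h).symm⟩⟩
  rintro ⟨r, rfl⟩
  rw [cross_smul_right, cross_self, mul_zero]

lemma mem_line_iff_cross_eq_zero {a b x : ℝ × ℝ} (hab : a ≠ b) :
    x ∈ line a b ↔ cross (b - a) (x - a) = 0 := by
  rw [line, ← exists_smul_eq_iff_cross_eq_zero (sub_ne_zero.2 hab.symm), ← vsub_eq_sub b a,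
    ← vsub_eq_sub x a, ← vadd_left_mem_affineSpan_pair, vsub_vadd]

lemma cross_eq_zero_of_mem_line {a b x : ℝ × ℝ} (hx : x ∈ line a b) :
    cross (b - a) (x - a) = 0 := by
  rcases eq_or_ne a b with rfl | hab
  · simp [cross]
  · exact (mem_line_iff_cross_eq_zero hab).1 hx

lemma cross_eq_zero_iff_of_cross_eq_zero {v w z : ℝ × ℝ} (hv : v ≠ 0) (hw : w ≠ 0)
    (hvw : cross v w = 0) : cross v z = 0 ↔ cross w z = 0 := by
  have h := cross_smul_eq v w z
  rw [hvw, zero_smul, cross_comm z w] at h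
  constructor <;> intro hz
  · rwa [hz, zero_smul, add_zero, eq_comm, smul_eq_zero_iff_left hv, neg_eq_zero] at h
  · rwa [hz, neg_zero, zero_smul, zero_add, eq_comm, smul_eq_zero_iff_left hw] at h

lemma cross_sub_of_cross_sub_eq_zero {v a x : ℝ × ℝ} (hx : cross v (x - a) = 0) (y : ℝ × ℝ) :
    cross v (y - a) = cross v (y - x) := by
  rw [← sub_sub_sub_cancel_right y x a, cross_sub_right v (y - a), hx, sub_zero]

lemma line_ne_line_of_cross_ne_zero {a b c d : ℝ × ℝ} (h : cross (b - a) (d - c) ≠ 0) :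
    line a b ≠ line c d := by
  intro heq
  have hc : c ∈ line a b := heq ▸ left_mem_affineSpan_pair ℝ c d
  have hd : d ∈ line a b := heq ▸ right_mem_affineSpan_pair ℝ c d
  apply h
  rw [← sub_sub_sub_cancel_right d c a, cross_sub_right, cross_eq_zero_of_mem_line hd,
    cross_eq_zero_of_mem_line hc, sub_zero]

lemma cross_ne_zero_of_line_ne_line {a b c d x : ℝ × ℝ} (hab : a ≠ b) (hcd : c ≠ d)
    (hxab : x ∈ line a b) (hxcd : x ∈ line c d) (hne : line a b ≠ line c d) :
    cross (b - a) (d - c) ≠ 0 := by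
  intro hpar
  apply hne
  ext y
  rw [mem_line_iff_cross_eq_zero hab, mem_line_iff_cross_eq_zero hcd,
    cross_sub_of_cross_sub_eq_zero (cross_eq_zero_of_mem_line hxab),
    cross_sub_of_cross_sub_eq_zero (cross_eq_zero_of_mem_line hxcd),
    cross_eq_zero_iff_of_cross_eq_zero (sub_ne_zero.2 hab.symm) (sub_ne_zero.2 hcd.symm) hpar]

lemma eq_add_smul_of_mem_line_of_mem_line {a b c d x : ℝ × ℝ} (h : cross (b - a) (d - c) ≠ 0)
    (hxab : x ∈ line a b) (hxcd : x ∈ line c d) :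
    x = a + (cross (c - a) (d - c) / cross (b - a) (d - c)) • (b - a) := by
  have hx := cross_eq_zero_of_mem_line hxcd
  have hca : cross (x - a) (d - c) = cross (c - a) (d - c) := by
    simp only [cross, Prod.fst_sub, Prod.snd_sub] at hx ⊢
    linear_combination -hx
  rw [← hca, ← eq_smul_of_cross_eq_zero h (cross_eq_zero_of_mem_line hxab), add_sub_cancel]

lemma mem_interT_of_cross {A : Set (ℝ × ℝ)} {a b c d x : ℝ × ℝ} (ha : a ∈ A) (hb : b ∈ A)
    (hc : c ∈ A) (hd : d ∈ A) (h : cross (b - a) (d - c) ≠ 0) (hxab : cross (b - a) (x - a) = 0)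
    (hxcd : cross (d - c) (x - c) = 0) : x ∈ interT A := by
  have hab : a ≠ b := by rintro rfl; simp [cross] at h
  have hcd : c ≠ d := by rintro rfl; simp [cross] at h
  exact ⟨a, ha, b, hb, c, hc, d, hd, hab, hcd, line_ne_line_of_cross_ne_zero h,
    (mem_line_iff_cross_eq_zero hab).2 hxab, (mem_line_iff_cross_eq_zero hcd).2 hxcd⟩

lemma mem_interT_of_vertex {A : Set (ℝ × ℝ)} {a b c : ℝ × ℝ} (ha : a ∈ A) (hb : b ∈ A)
    (hc : c ∈ A) (h : cross (b - a) (c - a) ≠ 0) : a ∈ interT A :=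
  mem_interT_of_cross ha hb ha hc h (by simp [cross]) (by simp [cross])

def ColumnMem (U : Set (ℝ × ℝ)) (u : ℝ) : Prop := (u, 0) ∈ U ∧ (u, 1) ∈ U ∧ (u, 2) ∈ U

section Closed

variable {U : Set (ℝ × ℝ)}

lemma columnMem_two_mul_sub (hU : interT U ⊆ U) {u v : ℝ} (huv : u ≠ v)
    (hu : ColumnMem U u) (hv : ColumnMem U v) : ColumnMem U (2 * v - u) := by
  obtain ⟨hu₀, hu₁, hu₂⟩ := hu
  obtain ⟨hv₀, hv₁, hv₂⟩ := hv
  have hw₀ : (2 * v - u, (0 : ℝ)) ∈ U := hU <| mem_interT_of_cross hu₀ hv₀ hu₂ hv₁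
    (by norm_num [cross, sub_eq_zero, huv, huv.symm]) (by simp [cross]) (by simp [cross]; ring)
  have hw₂ : (2 * v - u, (2 : ℝ)) ∈ U := hU <| mem_interT_of_cross hu₂ hv₂ hu₀ hv₁
    (by norm_num [cross, sub_eq_zero, huv, huv.symm]) (by simp [cross]) (by simp [cross]; ring)
  have hw₁ : (2 * v - u, (1 : ℝ)) ∈ U := hU <| mem_interT_of_cross hu₁ hv₁ hw₀ hw₂
    (by norm_num [cross, sub_eq_zero, huv, huv.symm]) (by simp [cross]) (by simp [cross])
  exact ⟨hw₀, hw₁, hw₂⟩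

lemma mem_of_vertical_of_diagonal (hU : interT U ⊆ U) {x y : ℝ} (h₀ : (x, 0) ∈ U)
    (h₁ : (x, 1) ∈ U) (h₀' : (x - y, 0) ∈ U) (h₁' : (x - y + 1, 1) ∈ U) : (x, y) ∈ U :=
  hU <| mem_interT_of_cross h₀ h₁ h₀' h₁' (by simp [cross]) (by simp [cross]) (by simp [cross])

lemma div_mem_of_row (hU : interT U ⊆ U) {r n d : ℝ} (hd : d ≠ 0) (h₀ : (0, r) ∈ U)
    (h₁ : (1, r) ∈ U) (h₀' : (0, r + 1) ∈ U) (hn : (n, r + 1 - d) ∈ U) : (n / d, r) ∈ U :=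
  hU <| mem_interT_of_cross h₀ h₁ h₀' hn (by simpa [cross] using hd) (by simp [cross])
    (by simp [cross]; field_simp; ring)

end Closed

end LineIntersection

open LineIntersection

lemma interT_ratPoints_subset : interT ratPoints ⊆ ratPoints := by
  rintro x ⟨_, ⟨a₁, a₂, rfl⟩, _, ⟨b₁, b₂, rfl⟩, _, ⟨c₁, c₂, rfl⟩, _, ⟨d₁, d₂, rfl⟩,
    hab, hcd, hne, hxab, hxcd⟩
  have hx := eq_add_smul_of_mem_line_of_mem_line
    (cross_ne_zero_of_line_ne_line hab hcd hxab hxcd hne) hxab hxcd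
  set t : ℚ := ((c₁ - a₁) * (d₂ - c₂) - (c₂ - a₂) * (d₁ - c₁)) /
    ((b₁ - a₁) * (d₂ - c₂) - (b₂ - a₂) * (d₁ - c₁))
  refine ⟨a₁ + t * (b₁ - a₁), a₂ + t * (b₂ - a₂), ?_⟩
  rw [hx]
  simp only [t, cross]
  push_cast
  rfl

lemma interT_mono : Monotone interT := by
  rintro A B hAB x ⟨a, ha, b, hb, c, hc, d, hd, h⟩
  exact ⟨a, hAB ha, b, hAB hb, c, hAB hc, d, hAB hd, h⟩

lemma interT_iUnion_subset {f : ℕ → Set (ℝ × ℝ)} (hf : Monotone f) :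
    interT (⋃ i, f i) ⊆ ⋃ i, interT (f i) := by
  rintro x ⟨a, ha, b, hb, c, hc, d, hd, h⟩
  obtain ⟨i, ha⟩ := mem_iUnion.1 ha
  obtain ⟨j, hb⟩ := mem_iUnion.1 hb
  obtain ⟨k, hc⟩ := mem_iUnion.1 hc
  obtain ⟨l, hd⟩ := mem_iUnion.1 hd
  have hle := fun {p} (hp : p ≤ max (max i j) (max k l)) => hf hp
  exact mem_iUnion.2 ⟨_, a, hle (by omega) ha, b, hle (by omega) hb, c, hle (by omega) hc, d,
    hle (by omega) hd, h⟩

lemma interT_iUnion_iterate_subset {S : Set (ℝ × ℝ)} (hS : S ⊆ interT S) :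
    interT (⋃ i, interT^[i] S) ⊆ ⋃ i, interT^[i] S := by
  refine (interT_iUnion_subset (interT_mono.monotone_iterate_of_le_map hS)).trans ?_
  exact iUnion_subset fun i => by
    rw [← Function.iterate_succ_apply' interT]
    exact subset_iUnion (fun i => interT^[i] S) (i + 1)

lemma ratPoints_subset_of_interT_subset {U : Set (ℝ × ℝ)} (hU : interT U ⊆ U) (h₀ : ColumnMem U 0)
    (h₁ : ColumnMem U 1) : ratPoints ⊆ U := by
  have hcol : ∀ m : ℤ, ColumnMem U m :=
    Int.forall_of_two_mul_sub (by simpa using h₀) (by simpa using h₁) fun m n hmn hm hn => by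
      simpa using columnMem_two_mul_sub hU (Int.cast_injective.ne hmn) hm hn
  have hlattice : ∀ m k : ℤ, ((m : ℝ), (k : ℝ)) ∈ U := fun m k =>
    mem_of_vertical_of_diagonal hU (hcol m).1 (hcol m).2.1 (by simpa using (hcol (m - k)).1)
      (by simpa using (hcol (m - k + 1)).2.1)
  have hrow : ∀ (q : ℚ) (k : ℤ), ((q : ℝ), (k : ℝ)) ∈ U := fun q k => by
    rw [Rat.cast_def]
    exact div_mem_of_row hU (by positivity) (by simpa using hlattice 0 k)
      (by simpa using hlattice 1 k) (by simpa using hlattice 0 (k + 1))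
      (by simpa using hlattice q.num (k + 1 - q.den))
  rintro _ ⟨a, b, rfl⟩
  exact mem_of_vertical_of_diagonal hU (by simpa using hrow a 0) (by simpa using hrow a 1)
    (by simpa using hrow (a - b) 0) (by simpa using hrow (a - b + 1) 1)

lemma sixPoints_subset_interT :
    ({((0 : ℝ), (0 : ℝ)), (0, 1), (0, 2), (1, 0), (1, 1), (1, 2)} : Set (ℝ × ℝ)) ⊆
      interT {((0 : ℝ), (0 : ℝ)), (0, 1), (0, 2), (1, 0), (1, 1), (1, 2)} := by
  rintro p (rfl | rfl | rfl | rfl | rfl | rfl)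
  · exact mem_interT_of_vertex (b := (1, 0)) (c := (0, 1)) (by simp) (by simp) (by simp)
      (by norm_num [cross])
  · exact mem_interT_of_vertex (b := (1, 1)) (c := (0, 0)) (by simp) (by simp) (by simp)
      (by norm_num [cross])
  · exact mem_interT_of_vertex (b := (1, 2)) (c := (0, 0)) (by simp) (by simp) (by simp)
      (by norm_num [cross])
  · exact mem_interT_of_vertex (b := (0, 0)) (c := (1, 1)) (by simp) (by simp) (by simp)
      (by norm_num [cross])
  · exact mem_interT_of_vertex (b := (0, 1)) (c := (1, 0)) (by simp) (by simp) (by simp)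
      (by norm_num [cross])
  · exact mem_interT_of_vertex (b := (0, 2)) (c := (1, 0)) (by simp) (by simp) (by simp)
      (by norm_num [cross])

lemma sixPoints_subset_ratPoints :
    ({((0 : ℝ), (0 : ℝ)), (0, 1), (0, 2), (1, 0), (1, 1), (1, 2)} : Set (ℝ × ℝ)) ⊆ ratPoints := by
  rintro p (rfl | rfl | rfl | rfl | rfl | rfl)
  exacts [⟨0, 0, by simp⟩, ⟨0, 1, by simp⟩, ⟨0, 2, by simp⟩, ⟨1, 0, by simp⟩, ⟨1, 1, by simp⟩,
    ⟨1, 2, by simp⟩]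

/-- Iterating `T` on `{(0,0), (0,1), (0,2), (1,0), (1,1), (1,2)}` generates all of `ℚ²`. -/
theorem iUnion_interT_sixPoints_eq_ratPoints :
    (⋃ i, interT^[i]
      ({((0 : ℝ), (0 : ℝ)), (0, 1), (0, 2), (1, 0), (1, 1), (1, 2)} : Set (ℝ × ℝ))) =
      ratPoints := by
  set S : Set (ℝ × ℝ) := {((0 : ℝ), (0 : ℝ)), (0, 1), (0, 2), (1, 0), (1, 1), (1, 2)}
  have hinv : MapsTo interT (Iic ratPoints) (Iic ratPoints) := fun A hA =>
    (interT_mono hA).trans interT_ratPoints_subset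
  refine subset_antisymm (iUnion_subset fun i => hinv.iterate i sixPoints_subset_ratPoints) ?_
  have hS : S ⊆ ⋃ i, interT^[i] S := subset_iUnion (fun i => interT^[i] S) 0
  exact ratPoints_subset_of_interT_subset (interT_iUnion_iterate_subset sixPoints_subset_interT)
    ⟨hS (by simp [S]), hS (by simp [S]), hS (by simp [S])⟩
    ⟨hS (by simp [S]), hS (by simp [S]), hS (by simp [S])⟩
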